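/- There exists a real number m with 0 < m < 1 such that K(m) = 2·E(m), where K(m) = ∫₀^{π/2} (1 − m sin²θ)^{−1/2} dθ and E(m) = ∫₀^{π/2} (1 − m sin²θ)^{1/2} dθ. -/

import Mathlib

open MeasureTheory intervalIntegral Real Filter Topology

/-- Complete elliptic integral of the first kind `K(m)`. -/
noncomputable def Kint (m : ℝ) : ℝ :=
  ∫ θ in (0:ℝ)..(π / 2), 1 / Real.sqrt (1 - m * Real.sin θ ^ 2)

/-- Complete elliptic integral of the second kind `E(m)`. -/
noncomputable def Eint (m : ℝ) : ℝ :=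
  ∫ θ in (0:ℝ)..(π / 2), Real.sqrt (1 - m * Real.sin θ ^ 2)

/-!
`K(0) = E(0) = π / 2`, so `K - 2E < 0` at `m = 0`. On the other hand `E ≤ π / 2` for `m ≥ 0`,
while `K` blows up logarithmically as `m → 1`: comparing with an integrand that has an
elementary primitive gives `K(1 - δ²) ≥ arsinh (1 / δ) ≥ log (1 / δ)`, which is `4 > π` for
`δ = e⁻⁴`. Both integrals depend continuously on `m < 1`, so the intermediate value theorem
produces a zero of `K - 2E` in between.
-/

lemma one_sub_mul_sin_sq_pos {m : ℝ} (hm : m < 1) (θ : ℝ) : 0 < 1 - m * sin θ ^ 2 := by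
  rcases le_or_gt m 0 with h | h
  · nlinarith [sq_nonneg (sin θ)]
  · nlinarith [sin_sq_le_one θ]

lemma continuousOn_Kint : ContinuousOn Kint (Set.Iio 1) := by
  rw [continuousOn_iff_continuous_domRestrict]
  refine continuous_parametric_intervalIntegral_of_continuous'
    (f := fun (m : Set.Iio (1 : ℝ)) θ => 1 / √(1 - m * sin θ ^ 2)) ?_ _ _
  refine continuous_const.div (by fun_prop) fun p => ?_
  exact (sqrt_pos.2 (one_sub_mul_sin_sq_pos p.1.2 p.2)).ne'

lemma continuous_Eint : Continuous Eint :=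
  continuous_parametric_intervalIntegral_of_continuous' (by fun_prop) _ _

lemma Kint_zero : Kint 0 = π / 2 := by simp [Kint]

lemma Eint_zero : Eint 0 = π / 2 := by simp [Eint]

lemma Eint_le_pi_div_two {m : ℝ} (hm : 0 ≤ m) : Eint m ≤ π / 2 := by
  have hle : Eint m ≤ ∫ _ in (0 : ℝ)..π / 2, (1 : ℝ) := by
    refine integral_mono_on (by positivity) ((by fun_prop : Continuous fun θ : ℝ =>
      √(1 - m * sin θ ^ 2)).intervalIntegrable _ _) intervalIntegrable_const fun θ _ => ?_
    exact sqrt_le_one.2 (by nlinarith [sq_nonneg (sin θ)])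
  simpa using hle

lemma log_le_arsinh {x : ℝ} (hx : 0 < x) : log x ≤ arsinh x := by
  rw [log_le_iff_le_exp hx, exp_arsinh]
  exact le_add_of_nonneg_right (sqrt_nonneg _)

lemma hasDerivAt_neg_arsinh_cos_div {δ : ℝ} (hδ : 0 < δ) (θ : ℝ) :
    HasDerivAt (fun t => -arsinh (cos t / δ)) (sin θ / √(cos θ ^ 2 + δ ^ 2)) θ := by
  refine ((hasDerivAt_cos θ).div_const δ).arsinh.neg.congr_deriv ?_
  have hsqrt : √(cos θ ^ 2 + δ ^ 2) = δ * √(1 + (cos θ / δ) ^ 2) := by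
    rw [show cos θ ^ 2 + δ ^ 2 = δ ^ 2 * (1 + (cos θ / δ) ^ 2) by field_simp; ring,
      sqrt_mul (sq_nonneg δ), sqrt_sq hδ.le]
  have : 0 < √(1 + (cos θ / δ) ^ 2) := sqrt_pos.2 (by positivity)
  rw [hsqrt, smul_eq_mul]
  field_simp

/-- Since `1 - (1 - δ ^ 2) sin² θ ≤ cos² θ + δ ^ 2`, the integrand of `K` dominates
`sin θ / √(cos θ ^ 2 + δ ^ 2)`, whose primitive is `-arsinh (cos θ / δ)`. -/
lemma arsinh_inv_le_Kint {δ : ℝ} (hδ : 0 < δ) : arsinh δ⁻¹ ≤ Kint (1 - δ ^ 2) := by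
  have hm : 1 - δ ^ 2 < 1 := sub_lt_self 1 (by positivity)
  have hpos (θ : ℝ) : 0 < cos θ ^ 2 + δ ^ 2 := by positivity
  have hcont : Continuous fun θ => sin θ / √(cos θ ^ 2 + δ ^ 2) :=
    continuous_sin.div (by fun_prop) fun θ => (sqrt_pos.2 (hpos θ)).ne'
  have hint : ∫ θ in (0 : ℝ)..π / 2, sin θ / √(cos θ ^ 2 + δ ^ 2) = arsinh δ⁻¹ := by
    rw [integral_eq_sub_of_hasDerivAt (fun θ _ => hasDerivAt_neg_arsinh_cos_div hδ θ)
      (hcont.intervalIntegrable _ _)]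
    simp
  rw [← hint]
  refine integral_mono_on (by positivity) (hcont.intervalIntegrable _ _) ?_ fun θ _ => ?_
  · refine (continuous_const.div (by fun_prop) fun θ => ?_).intervalIntegrable _ _
    exact (sqrt_pos.2 (one_sub_mul_sin_sq_pos hm θ)).ne'
  · have hle : 1 - (1 - δ ^ 2) * sin θ ^ 2 ≤ cos θ ^ 2 + δ ^ 2 := by
      nlinarith [sin_sq_add_cos_sq θ, sin_sq_le_one θ, sq_nonneg δ]
    calc sin θ / √(cos θ ^ 2 + δ ^ 2) ≤ 1 / √(cos θ ^ 2 + δ ^ 2) :=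
          div_le_div_of_nonneg_right (sin_le_one θ) (sqrt_nonneg _)
      _ ≤ 1 / √(1 - (1 - δ ^ 2) * sin θ ^ 2) :=
          one_div_le_one_div_of_le (sqrt_pos.2 (one_sub_mul_sin_sq_pos hm θ))
            (sqrt_le_sqrt hle)

/-- There is `0 < m < 1` with `K(m) = 2 E(m)`. -/
theorem stmt19 : ∃ m : ℝ, 0 < m ∧ m < 1 ∧ Kint m = 2 * Eint m := by
  set δ := exp (-4)
  have hδ : 0 < δ := exp_pos _
  have hδ1 : δ < 1 := exp_lt_one_iff.2 (by norm_num)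
  set m₀ := 1 - δ ^ 2
  have hm₀ : 0 < m₀ := by nlinarith
  have hm₀1 : m₀ < 1 := by nlinarith
  have hK : 4 ≤ Kint m₀ := by
    have h := (log_le_arsinh (inv_pos.2 hδ)).trans (arsinh_inv_le_Kint hδ)
    rwa [← exp_neg, neg_neg, log_exp] at h
  have hf : ContinuousOn (fun m => Kint m - 2 * Eint m) (Set.Icc 0 m₀) :=
    (continuousOn_Kint.mono fun m hm => hm.2.trans_lt hm₀1).sub
      (continuous_const.mul continuous_Eint).continuousOn
  have hsign : (0 : ℝ) ∈ Set.Ioo (Kint 0 - 2 * Eint 0) (Kint m₀ - 2 * Eint m₀) := by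
    rw [Kint_zero, Eint_zero]
    constructor <;> linarith [pi_pos, pi_lt_four, Eint_le_pi_div_two hm₀.le]
  obtain ⟨m, hm, hm0⟩ := intermediate_value_Ioo hm₀.le hf hsign
  exact ⟨m, hm.1, hm.2.trans hm₀1, by linarith⟩
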